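/- arXiv:2404.19728 — 3 statements merged into one kernel-verified Lean document; each statement's English description precedes it below -/
import Mathlib

section
/- Let K be an algebraically closed field of characteristic ≠ 2 and t ≥ 4. Then in K[[x,y]], the ideal ⟨x², y^t + x y²⟩ equals the ideal obtained from ⟨x² + y^{2t-4}, x y²⟩ by an automorphism; i.e., (x², y^t + x y²) is contact equivalent to (x² + y^{2t-4}, x y²). -/
open MvPowerSeries

noncomputable section

variable (K : Type) [Field K]

abbrev R2 := MvPowerSeries (Fin 2) K

def mIdeal : Ideal (R2 K) := Ideal.span {X 0, X 1}

/-- Formal partial derivative of a power series in two variables. -/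
def pd (i : Fin 2) (f : R2 K) : R2 K :=
  fun α => ((α i + 1 : ℕ) : K) * coeff (α + Finsupp.single i 1) f

def jacDet (f₁ f₂ : R2 K) : R2 K :=
  pd K 0 f₁ * pd K 1 f₂ - pd K 1 f₁ * pd K 0 f₂

def ContactEquiv (f g : R2 K × R2 K) : Prop :=
  ∃ φ : R2 K ≃ₐ[K] R2 K,
    Ideal.map φ.toAlgHom.toRingHom (Ideal.span {f.1, f.2}) = Ideal.span {g.1, g.2}

def IsICIS (f₁ f₂ : R2 K) : Prop :=
  f₁ ∈ mIdeal K ∧ f₂ ∈ mIdeal K ∧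
  (∀ g : R2 K, Ideal.span {f₁, f₂} ≠ Ideal.span {g}) ∧
  f₁ ≠ 0 ∧ (∀ a : R2 K, a * f₂ ∈ Ideal.span {f₁} → a ∈ Ideal.span {f₁}) ∧
  ∃ k : ℕ, (mIdeal K) ^ k ≤ Ideal.span {f₁, f₂} ⊔ Ideal.span {jacDet K f₁ f₂}

/-- Determinant of the Hessian matrix of a power series in two variables. -/
def hessDet (f : R2 K) : K :=
  (2 * coeff (Finsupp.single 0 2) f) * (2 * coeff (Finsupp.single 1 2) f) -
    (coeff (Finsupp.single 0 1 + Finsupp.single 1 1) f) ^ 2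


end

noncomputable section
namespace CAux
open Finset
variable {K : Type} [Field K]

abbrev R2 (K : Type) [Field K] := MvPowerSeries (Fin 2) K

def e (a b : ℕ) : Fin 2 →₀ ℕ := Finsupp.single 0 a + Finsupp.single 1 b

@[simp] lemma e_apply0 (a b : ℕ) : e a b 0 = a := by simp [e]
@[simp] lemma e_apply1 (a b : ℕ) : e a b 1 = b := by simp [e, Finsupp.single_apply]

lemma e_surj (α : Fin 2 →₀ ℕ) : α = e (α 0) (α 1) := by
  ext x
  fin_cases x <;> simp

@[simp] lemma e_eq_iff {a b c d : ℕ} : e a b = e c d ↔ a = c ∧ b = d := by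
  constructor
  · intro h
    constructor
    · have := congrArg (fun f => f 0) h; simpa using this
    · have := congrArg (fun f => f 1) h; simpa using this
  · rintro ⟨rfl, rfl⟩; rfl

lemma e_add (a b c d : ℕ) : e a b + e c d = e (a+c) (b+d) := by
  ext x; fin_cases x <;> simp

@[simp] lemma e_zero : e 0 0 = 0 := by simp [e]

lemma coeff_apply (f : R2 K) (α : Fin 2 →₀ ℕ) : coeff α f = f α := rfl

lemma coeff_mul2 (f g : R2 K) (a b : ℕ) :
    coeff (e a b) (f * g)
      = ∑ p ∈ range (a+1), ∑ q ∈ range (b+1),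
          coeff (e p q) f * coeff (e (a-p) (b-q)) g := by
  rw [coeff_mul, ← Finset.sum_product']
  refine Finset.sum_nbij' (fun x => (x.1 0, x.1 1)) (fun x => (e x.1 x.2, e (a - x.1) (b - x.2))) ?_ ?_ ?_ ?_ ?_
  · rintro ⟨β, γ⟩ h
    rw [Finset.HasAntidiagonal.mem_antidiagonal] at h
    have h0 : β 0 + γ 0 = a := by
      have := congrArg (fun f => f 0) h; simpa using this
    have h1 : β 1 + γ 1 = b := by
      have := congrArg (fun f => f 1) h; simpa using this
    simp only [Finset.mem_product, Finset.mem_range]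
    omega
  · rintro ⟨p, q⟩ h
    simp only [Finset.mem_product, Finset.mem_range] at h
    rw [Finset.HasAntidiagonal.mem_antidiagonal, e_add]
    congr 1 <;> omega
  · rintro ⟨β, γ⟩ h
    rw [Finset.HasAntidiagonal.mem_antidiagonal] at h
    have h0 : β 0 + γ 0 = a := by
      have := congrArg (fun f => f 0) h; simpa using this
    have h1 : β 1 + γ 1 = b := by
      have := congrArg (fun f => f 1) h; simpa using this
    have hβ : β = e (β 0) (β 1) := e_surj β
    have hγ : γ = e (γ 0) (γ 1) := e_surj γ
    ext : 1
    · exact hβ.symm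
    · rw [hγ]; simp; constructor <;> omega
  · rintro ⟨p, q⟩ h
    simp
  · rintro ⟨β, γ⟩ h
    rw [Finset.HasAntidiagonal.mem_antidiagonal] at h
    have h0 : β 0 + γ 0 = a := by
      have := congrArg (fun f => f 0) h; simpa using this
    have h1 : β 1 + γ 1 = b := by
      have := congrArg (fun f => f 1) h; simpa using this
    have hβ : e (β 0) (β 1) = β := (e_surj β).symm
    have hγ : e (a - β 0) (b - β 1) = γ := by
      rw [e_surj γ]; simp; omega
    rw [hβ, hγ]


variable (s : ℕ) (u : K)

/-- Substitution `x ↦ x + u y^s` on `K[[x,y]]`, defined coefficientwise. -/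
def D (f : R2 K) : R2 K := fun α =>
  ∑ k ∈ range (α 1 + 1), if s * k ≤ α 1 then
    u ^ k * ((α 0 + k).choose k : K) * coeff (e (α 0 + k) (α 1 - s * k)) f else 0

lemma coeff_D (f : R2 K) (a b : ℕ) :
    coeff (e a b) (D s u f)
      = ∑ k ∈ range (b+1), if s * k ≤ b then
          u ^ k * ((a + k).choose k : K) * coeff (e (a + k) (b - s * k)) f else 0 := by
  show D s u f (e a b) = _
  simp only [D, e_apply0, e_apply1]

/-- Extend the summation range: any `M ≥ b` works (needs `1 ≤ s`). -/
lemma coeff_D_ext (hs : 1 ≤ s) (f : R2 K) (a b M : ℕ) (hM : b ≤ M) :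
    coeff (e a b) (D s u f)
      = ∑ k ∈ range (M+1), if s * k ≤ b then
          u ^ k * ((a + k).choose k : K) * coeff (e (a + k) (b - s * k)) f else 0 := by
  rw [coeff_D]
  refine Finset.sum_subset ?_ ?_
  · intro x hx; simp only [mem_range] at *; omega
  · intro x hx hx'
    simp only [mem_range] at hx hx'
    have : ¬ (s * x ≤ b) := by
      intro h
      have : x ≤ s * x := Nat.le_mul_of_pos_left x hs
      omega
    simp [this]

lemma D_add (f g : R2 K) : D s u (f + g) = D s u f + D s u g := by
  ext α
  rw [e_surj α]
  show coeff _ _ = coeff _ (D s u f) + coeff _ (D s u g)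
  simp only [coeff_D, map_add, mul_add, ← Finset.sum_add_distrib]
  refine Finset.sum_congr rfl fun k _ => ?_
  split <;> simp

lemma e_eq_zero_iff {a b : ℕ} : e a b = 0 ↔ a = 0 ∧ b = 0 := by
  rw [show (0 : Fin 2 →₀ ℕ) = e 0 0 from e_zero.symm, e_eq_iff]

lemma e_single0 (a : ℕ) : e a 0 = Finsupp.single 0 a := by simp [e]
lemma e_single1 (b : ℕ) : e 0 b = Finsupp.single 1 b := by simp [e]

lemma coeff_D_monomial (hs : 1 ≤ s) (c d : ℕ) (w : K) (a b : ℕ) :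
    coeff (e a b) (D s u (monomial (e c d) w))
      = if a ≤ c ∧ b = s * (c - a) + d then
          u ^ (c - a) * ((c).choose (c - a) : K) * w else 0 := by
  rw [coeff_D]
  by_cases H : a ≤ c ∧ b = s * (c - a) + d
  · obtain ⟨h1, h2⟩ := H
    rw [if_pos ⟨h1, h2⟩]
    rw [Finset.sum_eq_single_of_mem (c - a)]
    · have hle : s * (c - a) ≤ b := by omega
      have hadd : a + (c - a) = c := by omega
      have hsub : b - s * (c - a) = d := by omega
      rw [if_pos hle, hadd, hsub, coeff_monomial_same]
    · simp only [mem_range]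
      have : c - a ≤ s * (c - a) := Nat.le_mul_of_pos_left _ hs
      omega
    · intro k hk hkne
      by_cases hle : s * k ≤ b
      · rw [if_pos hle]
        rw [coeff_monomial]
        rw [if_neg, mul_zero]
        rw [e_eq_iff]
        rintro ⟨hk1, -⟩
        exact hkne (by omega)
      · rw [if_neg hle]
  · rw [if_neg H]
    apply Finset.sum_eq_zero
    intro k hk
    by_cases hle : s * k ≤ b
    · rw [if_pos hle, coeff_monomial, if_neg, mul_zero]
      rw [e_eq_iff]
      rintro ⟨hk1, hk2⟩
      apply H
      have hka : k = c - a := by omega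
      subst hka
      omega
    · rw [if_neg hle]

lemma D_C (hs : 1 ≤ s) (w : K) : D s u ((C : K →+* R2 K) w) = (C : K →+* R2 K) w := by
  ext α
  rw [e_surj α]
  rw [show ((C : K →+* R2 K) w : R2 K) = monomial (e 0 0) w from by rw [e_zero]; rfl]
  rw [coeff_D_monomial s u hs]
  rw [coeff_monomial]
  simp only [e_eq_iff]
  by_cases H : α 0 = 0 ∧ α 1 = 0
  · obtain ⟨h1, h2⟩ := H
    rw [if_pos ⟨by omega, by simp [h1, h2]⟩, if_pos ⟨h1, h2⟩]
    simp [h1]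
  · rw [if_neg, if_neg H]
    rintro ⟨ha, hb⟩
    have h0 : α 0 = 0 := by omega
    rw [h0] at hb
    simp at hb
    exact H ⟨h0, hb⟩

lemma D_one (hs : 1 ≤ s) : D s u (1 : R2 K) = 1 := by
  have := D_C s u hs (1 : K)
  simpa using this

lemma D_X0 (hs : 1 ≤ s) :
    D s u (X 0 : R2 K) = X 0 + (C : K →+* R2 K) u * X 1 ^ s := by
  have hX0 : (X 0 : R2 K) = monomial (e 1 0) 1 := by
    rw [e_single0]; rfl
  have hX1s : ((C : K →+* R2 K) u * X 1 ^ s : R2 K) = monomial (e 0 s) u := by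
    rw [X_pow_eq, ← e_single1]
    rw [show ((C : K →+* R2 K) u : R2 K) = monomial (0 : Fin 2 →₀ ℕ) u from rfl]
    rw [monomial_mul_monomial, zero_add, mul_one]
  ext α
  rw [e_surj α]
  rw [hX0, coeff_D_monomial s u hs, map_add, hX1s, ← hX0]
  rw [hX0, coeff_monomial, coeff_monomial]
  simp only [e_eq_iff]
  by_cases H1 : α 0 = 1 ∧ α 1 = 0
  · obtain ⟨h1, h2⟩ := H1
    rw [if_pos ⟨by omega, by simp [h1]; omega⟩, if_pos ⟨h1, h2⟩, if_neg (by omega)]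
    simp [h1]
  · by_cases H2 : α 0 = 0 ∧ α 1 = s
    · obtain ⟨h1, h2⟩ := H2
      rw [if_pos ⟨by omega, by simp [h1]; omega⟩, if_neg (by omega), if_pos ⟨h1, h2⟩]
      simp [h1]
    · rw [if_neg, if_neg (by omega), if_neg (by omega)]
      · simp
      · rintro ⟨ha, hb⟩
        interval_cases h : α 0
        · exact H2 ⟨rfl, by simpa using hb⟩
        · exact H1 ⟨rfl, by simpa using hb⟩

lemma D_X1 (hs : 1 ≤ s) : D s u (X 1 : R2 K) = X 1 := by
  have hX1 : (X 1 : R2 K) = monomial (e 0 1) 1 := by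
    rw [e_single1]; rfl
  ext α
  rw [e_surj α]
  rw [hX1, coeff_D_monomial s u hs, coeff_monomial]
  simp only [e_eq_iff]
  by_cases H : α 0 = 0 ∧ α 1 = 1
  · obtain ⟨h1, h2⟩ := H
    rw [if_pos ⟨by omega, by simp [h1, h2]⟩, if_pos ⟨h1, h2⟩]
    simp
  · rw [if_neg, if_neg H]
    rintro ⟨ha, hb⟩
    have h0 : α 0 = 0 := by omega
    rw [h0] at hb
    simp at hb
    exact H ⟨h0, hb⟩


lemma choose_aux (a k j : ℕ) :
    (a + k).choose k * (a + k + j).choose j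
      = (a + k + j).choose (k + j) * (k + j).choose k := by
  have h := Nat.choose_mul (n := a + k + j) (k := a + k) (s := a)
    (Nat.le_add_right a k)
  have e1 : (a + k + j).choose (a + k) = (a + k + j).choose j := by
    have h1 := Nat.choose_symm (show j ≤ a + k + j by omega)
    rw [show a + k + j - j = a + k by omega] at h1
    exact h1
  have e2 : (a + k).choose a = (a + k).choose k := by
    have h1 := Nat.choose_symm (show k ≤ a + k by omega)
    rw [show a + k - k = a by omega] at h1
    exact h1
  have e3 : (a + k + j).choose a = (a + k + j).choose (k + j) := by
    have h1 := Nat.choose_symm (show k + j ≤ a + k + j by omega)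
    rw [show a + k + j - (k + j) = a by omega] at h1
    exact h1
  rw [e1, e2, e3, show a + k + j - a = k + j by omega,
    show a + k - a = k by omega] at h
  rw [Nat.mul_comm] at h
  exact h

lemma D_comp (hs : 1 ≤ s) (v : K) (f : R2 K) :
    D s u (D s v f) = D s (u + v) f := by
  ext α
  rw [e_surj α]
  generalize α 0 = a
  generalize α 1 = b
  -- LHS = sum over pairs
  have hL : coeff (e a b) (D s u (D s v f))
      = ∑ x ∈ (range (b+1)) ×ˢ (range (b+1)),
          if s * x.1 ≤ b ∧ s * x.2 ≤ b - s * x.1 then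
            u ^ x.1 * v ^ x.2 * ((a + x.1).choose x.1 : K)
              * ((a + x.1 + x.2).choose x.2 : K)
              * coeff (e (a + x.1 + x.2) (b - s * x.1 - s * x.2)) f
          else 0 := by
    rw [coeff_D, Finset.sum_product]
    refine Finset.sum_congr rfl fun k hk => ?_
    by_cases h1 : s * k ≤ b
    · rw [if_pos h1]
      rw [coeff_D_ext s v hs f (a + k) (b - s * k) b (by omega), Finset.mul_sum]
      refine Finset.sum_congr rfl fun j hj => ?_
      by_cases h2 : s * j ≤ b - s * k
      · rw [if_pos h2, if_pos ⟨h1, h2⟩]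
        ring
      · rw [if_neg h2, if_neg (by tauto), mul_zero]
    · rw [if_neg h1]
      exact (Finset.sum_eq_zero fun j hj => by rw [if_neg (by tauto)]).symm
  -- RHS = sum over pairs
  have hR : coeff (e a b) (D s (u + v) f)
      = ∑ x ∈ (range (b+1)) ×ˢ (range (b+1)),
          if s * x.1 ≤ b ∧ x.2 ≤ x.1 then
            u ^ x.2 * v ^ (x.1 - x.2) * ((x.1).choose x.2 : K)
              * ((a + x.1).choose x.1 : K)
              * coeff (e (a + x.1) (b - s * x.1)) f
          else 0 := by
    rw [coeff_D, Finset.sum_product]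
    refine Finset.sum_congr rfl fun m hm => ?_
    simp only [mem_range] at hm
    by_cases h1 : s * m ≤ b
    · rw [if_pos h1, add_pow, Finset.sum_mul, Finset.sum_mul]
      have hmm : m ≤ s * m := Nat.le_mul_of_pos_left m hs
      have hfil : (range (b+1)).filter (fun i => i ≤ m) = range (m+1) := by
        ext i
        simp only [Finset.mem_filter, mem_range]
        omega
      symm
      calc ∑ i ∈ range (b+1), (if s * m ≤ b ∧ i ≤ m then
              u ^ i * v ^ (m - i) * ((m).choose i : K)
                * ((a + m).choose m : K) * coeff (e (a + m) (b - s * m)) f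
              else 0)
          = ∑ i ∈ range (b+1), (if i ≤ m then
              u ^ i * v ^ (m - i) * ((m).choose i : K)
                * ((a + m).choose m : K) * coeff (e (a + m) (b - s * m)) f
              else 0) := by
            refine Finset.sum_congr rfl fun i _ => ?_
            simp [h1]
        _ = ∑ i ∈ (range (b+1)).filter (fun i => i ≤ m),
              u ^ i * v ^ (m - i) * ((m).choose i : K)
                * ((a + m).choose m : K) * coeff (e (a + m) (b - s * m)) f := by
            rw [Finset.sum_filter]
        _ = ∑ i ∈ range (m+1),
              u ^ i * v ^ (m - i) * ((m).choose i : K)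
                * ((a + m).choose m : K) * coeff (e (a + m) (b - s * m)) f := by
            rw [hfil]
        _ = ∑ i ∈ range (m+1),
              u ^ i * v ^ (m - i) * ((m).choose i : K)
                * ((a + m).choose m : K) * coeff (e (a + m) (b - s * m)) f := rfl
    · rw [if_neg h1]
      exact (Finset.sum_eq_zero fun j hj => by rw [if_neg (by tauto)]).symm
  rw [hL, hR]
  rw [← Finset.sum_filter, ← Finset.sum_filter]
  refine Finset.sum_nbij' (fun x => (x.1 + x.2, x.1)) (fun x => (x.2, x.1 - x.2))
    ?_ ?_ ?_ ?_ ?_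
  · rintro ⟨k, j⟩ hx
    simp only [Finset.mem_filter, Finset.mem_product, mem_range] at hx ⊢
    obtain ⟨⟨hk, hj⟩, h1, h2⟩ := hx
    have e1 : s * (k + j) = s * k + s * j := Nat.mul_add s k j
    have e2 : k + j ≤ s * (k + j) := Nat.le_mul_of_pos_left _ hs
    omega
  · rintro ⟨m, i⟩ hx
    simp only [Finset.mem_filter, Finset.mem_product, mem_range] at hx ⊢
    obtain ⟨⟨hm, hi⟩, h1, h2⟩ := hx
    have e1 : s * (m - i) + s * i = s * m := by
      rw [← Nat.mul_add]; congr 1; omega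
    have e3 : i ≤ s * i := Nat.le_mul_of_pos_left _ hs
    have e4 : m ≤ s * m := Nat.le_mul_of_pos_left _ hs
    omega
  · rintro ⟨k, j⟩ hx
    simp only [Finset.mem_filter, Finset.mem_product, mem_range] at hx
    dsimp only
    simp only [Prod.mk.injEq]
    exact ⟨trivial, by omega⟩
  · rintro ⟨m, i⟩ hx
    simp only [Finset.mem_filter, Finset.mem_product, mem_range] at hx
    dsimp only
    simp only [Prod.mk.injEq]
    exact ⟨by omega, trivial⟩
  · rintro ⟨k, j⟩ hx
    simp only [Finset.mem_filter, Finset.mem_product, mem_range] at hx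
    obtain ⟨⟨hk, hj⟩, h1, h2⟩ := hx
    have e1 : s * (k + j) = s * k + s * j := Nat.mul_add s k j
    have e2 : k + j - k = j := by omega
    have e3 : b - s * (k + j) = b - s * k - s * j := by omega
    have e4 : a + (k + j) = a + k + j := by omega
    rw [e2, e3, e4]
    have hb2 := choose_aux a k j
    have hbK : ((a + k).choose k : K) * ((a + k + j).choose j : K)
        = ((a + k + j).choose (k + j) : K) * ((k + j).choose k : K) := by
      exact_mod_cast congrArg (fun n : ℕ => (n : K)) hb2
    calc u ^ k * v ^ j * ((a + k).choose k : K) * ((a + k + j).choose j : K)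
          * coeff (e (a + k + j) (b - s * k - s * j)) f
        = (((a + k).choose k : K) * ((a + k + j).choose j : K)) * (u ^ k * v ^ j
          * coeff (e (a + k + j) (b - s * k - s * j)) f) := by ring
      _ = (((a + k + j).choose (k + j) : K) * ((k + j).choose k : K)) * (u ^ k * v ^ j
          * coeff (e (a + k + j) (b - s * k - s * j)) f) := by rw [hbK]
      _ = _ := by ring


lemma coeff_mul2_ext (f g : R2 K) (a b A B : ℕ) (hA : a ≤ A) (hB : b ≤ B) :
    coeff (e a b) (f * g)
      = ∑ x ∈ range (A+1) ×ˢ range (B+1),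
          if x.1 ≤ a ∧ x.2 ≤ b then
            coeff (e x.1 x.2) f * coeff (e (a - x.1) (b - x.2)) g
          else 0 := by
  have hfil : (range (A+1) ×ˢ range (B+1)).filter (fun x => x.1 ≤ a ∧ x.2 ≤ b)
      = range (a+1) ×ˢ range (b+1) := by
    ext ⟨p, q⟩
    simp only [Finset.mem_filter, Finset.mem_product, mem_range]
    omega
  rw [← Finset.sum_filter, hfil, Finset.sum_product, coeff_mul2]

/-- Vandermonde splitting of the binomial coefficient, in guarded form. -/
lemma vand_aux (hs : 1 ≤ s) (a b k p : ℕ) (hk : s * k ≤ b) (hp : p ≤ a + k) :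
    (((a + k).choose k : ℕ) : K)
      = ∑ i ∈ range (b+1), if i ≤ k ∧ i ≤ p ∧ p ≤ a + i then
          ((p.choose i : ℕ) : K) * (((a + k - p).choose (k - i) : ℕ) : K) else 0 := by
  have h1 := Nat.add_choose_eq p (a + k - p) k
  rw [show p + (a + k - p) = a + k by omega] at h1
  rw [Finset.Nat.sum_antidiagonal_eq_sum_range_succ_mk] at h1
  have h2 : (((a + k).choose k : ℕ) : K)
      = ∑ i ∈ range (k+1), ((p.choose i : ℕ) : K) * (((a + k - p).choose (k - i) : ℕ) : K) := by
    rw [h1]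
    push_cast
    rfl
  rw [h2]
  have hkb : k ≤ b := le_trans (Nat.le_mul_of_pos_left k hs) hk
  have step : ∑ i ∈ range (k+1), ((p.choose i : ℕ) : K) * (((a + k - p).choose (k - i) : ℕ) : K)
      = ∑ i ∈ range (k+1), (if i ≤ k ∧ i ≤ p ∧ p ≤ a + i then
          ((p.choose i : ℕ) : K) * (((a + k - p).choose (k - i) : ℕ) : K) else 0) := by
    refine Finset.sum_congr rfl fun i hi => ?_
    simp only [mem_range] at hi
    by_cases hc : i ≤ k ∧ i ≤ p ∧ p ≤ a + i
    · rw [if_pos hc]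
    · rw [if_neg hc]
      rcases Nat.lt_or_ge p i with hpi | hpi
      · rw [Nat.choose_eq_zero_of_lt hpi]
        simp
      · have hpa : a + i < p := by
          rcases Nat.lt_or_ge (a + i) p with h | h
          · exact h
          · exact absurd ⟨by omega, hpi, h⟩ hc
        rw [Nat.choose_eq_zero_of_lt (show a + k - p < k - i by omega)]
        simp
  rw [step]
  refine Finset.sum_subset (Finset.range_subset_range.mpr (by omega)) ?_
  intro i hi hi'
  simp only [mem_range] at hi hi'
  rw [if_neg (by omega)]

lemma D_mul (hs : 1 ≤ s) (f g : R2 K) :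
    D s u (f * g) = D s u f * D s u g := by
  ext α
  rw [e_surj α]
  generalize α 0 = a
  generalize α 1 = b
  -- LHS as a 4-fold guarded sum
  have hL : coeff (e a b) (D s u (f * g))
      = ∑ y ∈ (range (b+1) ×ˢ (range (a+b+1) ×ˢ range (b+1))) ×ˢ range (b+1),
          if s * y.1.1 ≤ b ∧ y.1.2.1 ≤ a + y.1.1 ∧ y.1.2.2 ≤ b - s * y.1.1
              ∧ y.2 ≤ y.1.1 ∧ y.2 ≤ y.1.2.1 ∧ y.1.2.1 ≤ a + y.2 then
            u ^ y.1.1 * ((y.1.2.1.choose y.2 : ℕ) : K)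
              * (((a + y.1.1 - y.1.2.1).choose (y.1.1 - y.2) : ℕ) : K)
              * coeff (e y.1.2.1 y.1.2.2) f
              * coeff (e (a + y.1.1 - y.1.2.1) (b - s * y.1.1 - y.1.2.2)) g
          else 0 := by
    rw [coeff_D, Finset.sum_product, Finset.sum_product]
    refine Finset.sum_congr rfl fun k hk => ?_
    simp only [mem_range] at hk
    by_cases h1 : s * k ≤ b
    · rw [if_pos h1]
      have hkb : k ≤ b := le_trans (Nat.le_mul_of_pos_left k hs) h1
      rw [coeff_mul2_ext f g (a+k) (b - s*k) (a+b) b (by omega) (by omega), Finset.mul_sum]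
      refine Finset.sum_congr rfl fun x hx => ?_
      by_cases h2 : x.1 ≤ a + k ∧ x.2 ≤ b - s * k
      · rw [if_pos h2]
        rw [show u ^ k * ((a + k).choose k : K)
              * (coeff (e x.1 x.2) f * coeff (e (a + k - x.1) (b - s * k - x.2)) g)
            = ((a + k).choose k : K) * (u ^ k * coeff (e x.1 x.2) f
                * coeff (e (a + k - x.1) (b - s * k - x.2)) g) from by ring]
        rw [vand_aux s hs a b k x.1 h1 h2.1, Finset.sum_mul]
        refine Finset.sum_congr rfl fun i hi => ?_
        by_cases h3 : i ≤ k ∧ i ≤ x.1 ∧ x.1 ≤ a + i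
        · rw [if_pos h3, if_pos ⟨h1, h2.1, h2.2, h3.1, h3.2.1, h3.2.2⟩]
          ring
        · rw [if_neg h3, if_neg (by tauto), zero_mul]
      · rw [if_neg h2]
        rw [mul_zero]
        exact (Finset.sum_eq_zero fun i hi => by rw [if_neg (by tauto)]).symm
    · rw [if_neg h1]
      symm
      refine Finset.sum_eq_zero fun x hx => Finset.sum_eq_zero fun i hi => ?_
      rw [if_neg (by tauto)]
  -- RHS as a 4-fold guarded sum
  have hR : coeff (e a b) (D s u f * D s u g)
      = ∑ z ∈ (range (a+1) ×ˢ range (b+1)) ×ˢ (range (b+1) ×ˢ range (b+1)),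
          if s * z.2.1 ≤ z.1.2 ∧ s * z.2.2 ≤ b - z.1.2 then
            u ^ z.2.1 * u ^ z.2.2
              * (((z.1.1 + z.2.1).choose z.2.1 : ℕ) : K)
              * (((a - z.1.1 + z.2.2).choose z.2.2 : ℕ) : K)
              * coeff (e (z.1.1 + z.2.1) (z.1.2 - s * z.2.1)) f
              * coeff (e (a - z.1.1 + z.2.2) (b - z.1.2 - s * z.2.2)) g
          else 0 := by
    rw [coeff_mul2, Finset.sum_product, Finset.sum_product]
    refine Finset.sum_congr rfl fun p hp => Finset.sum_congr rfl fun q hq => ?_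
    simp only [mem_range] at hp hq
    rw [coeff_D_ext s u hs f p q b (by omega),
      coeff_D_ext s u hs g (a - p) (b - q) b (by omega),
      Finset.sum_mul_sum]
    rw [Finset.sum_product]
    refine Finset.sum_congr rfl fun i hi => Finset.sum_congr rfl fun j hj => ?_
    dsimp only
    by_cases h1 : s * i ≤ q
    · by_cases h2 : s * j ≤ b - q
      · rw [if_pos h1, if_pos h2, if_pos ⟨h1, h2⟩]
        ring
      · rw [if_neg h2, mul_zero,
          if_neg (show ¬(s * i ≤ q ∧ s * j ≤ b - q) from fun hc => h2 hc.2)]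
    · rw [if_neg h1, zero_mul,
          if_neg (show ¬(s * i ≤ q ∧ s * j ≤ b - q) from fun hc => h1 hc.1)]
  rw [hL, hR]
  rw [← Finset.sum_filter, ← Finset.sum_filter]
  refine Finset.sum_nbij'
    (fun y => ((y.1.2.1 - y.2, y.1.2.2 + s * y.2), (y.2, y.1.1 - y.2)))
    (fun z => ((z.2.1 + z.2.2, (z.1.1 + z.2.1, z.1.2 - s * z.2.1)), z.2.1))
    ?_ ?_ ?_ ?_ ?_
  · rintro ⟨⟨k, p, q⟩, i⟩ hy
    simp only [Finset.mem_filter, Finset.mem_product, mem_range] at hy ⊢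
    obtain ⟨⟨⟨hk, hp, hq⟩, hi⟩, c1, c2, c3, c4, c5, c6⟩ := hy
    have e1 : s * i ≤ s * k := Nat.mul_le_mul_left s c4
    have e2 : s * (k - i) + s * i = s * k := by
      rw [← Nat.mul_add]; congr 1; omega
    omega
  · rintro ⟨⟨p, q⟩, i, j⟩ hz
    simp only [Finset.mem_filter, Finset.mem_product, mem_range] at hz ⊢
    obtain ⟨⟨⟨hp, hq⟩, hi, hj⟩, c1, c2⟩ := hz
    have e1 : s * (i + j) = s * i + s * j := Nat.mul_add s i j
    have e2 : i + j ≤ s * (i + j) := Nat.le_mul_of_pos_left _ hs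
    omega
  · rintro ⟨⟨k, p, q⟩, i⟩ hy
    simp only [Finset.mem_filter, Finset.mem_product, mem_range] at hy
    obtain ⟨⟨⟨hk, hp, hq⟩, hi⟩, c1, c2, c3, c4, c5, c6⟩ := hy
    dsimp only
    simp only [Prod.mk.injEq]
    exact ⟨⟨by omega, by omega, by omega⟩, trivial⟩
  · rintro ⟨⟨p, q⟩, i, j⟩ hz
    simp only [Finset.mem_filter, Finset.mem_product, mem_range] at hz
    obtain ⟨⟨⟨hp, hq⟩, hi, hj⟩, c1, c2⟩ := hz
    dsimp only
    simp only [Prod.mk.injEq]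
    exact ⟨⟨by omega, by omega⟩, trivial, by omega⟩
  · rintro ⟨⟨k, p, q⟩, i⟩ hy
    simp only [Finset.mem_filter, Finset.mem_product, mem_range] at hy
    obtain ⟨⟨⟨hk, hp, hq⟩, hi⟩, c1, c2, c3, c4, c5, c6⟩ := hy
    dsimp only
    have e2 : s * (k - i) + s * i = s * k := by
      rw [← Nat.mul_add]; congr 1; omega
    have r1 : p - i + i = p := by omega
    have r2 : q + s * i - s * i = q := by omega
    have r3 : a - (p - i) + (k - i) = a + k - p := by omega
    have r4 : b - (q + s * i) - s * (k - i) = b - s * k - q := by omega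
    have r5 : u ^ i * u ^ (k - i) = u ^ k := by
      rw [← pow_add]; congr 1; omega
    rw [r1, r2, r3, r4]
    rw [show u ^ i * u ^ (k - i) * ((p.choose i : ℕ) : K)
          * (((a + k - p).choose (k - i) : ℕ) : K)
          * coeff (e p q) f * coeff (e (a + k - p) (b - s * k - q)) g
        = (u ^ i * u ^ (k - i)) * ((p.choose i : ℕ) : K)
          * (((a + k - p).choose (k - i) : ℕ) : K)
          * coeff (e p q) f * coeff (e (a + k - p) (b - s * k - q)) g from by ring]
    rw [r5]


lemma D_zero_elem : D s u (0 : R2 K) = 0 := by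
  ext α
  rw [e_surj α, coeff_D]
  simp

lemma D_zero_param (hs : 1 ≤ s) (f : R2 K) : D s (0 : K) f = f := by
  ext α
  rw [e_surj α, coeff_D]
  rw [Finset.sum_eq_single_of_mem 0 (by simp)]
  · rw [if_pos (by simp)]
    simp
  · intro k hk hk0
    split
    · rw [zero_pow hk0]
      ring
    · rfl

def substAlgHom (hs : 1 ≤ s) : R2 K →ₐ[K] R2 K where
  toFun := D s u
  map_one' := D_one s u hs
  map_mul' := D_mul s u hs
  map_zero' := D_zero_elem s u
  map_add' := D_add s u
  commutes' := fun w => by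
    show D s u (algebraMap K (R2 K) w) = algebraMap K (R2 K) w
    rw [← c_eq_algebraMap]
    exact D_C s u hs w

def substAlgEquiv (hs : 1 ≤ s) : R2 K ≃ₐ[K] R2 K :=
  AlgEquiv.ofAlgHom (substAlgHom s u hs) (substAlgHom s (-u) hs)
    (AlgHom.ext fun f => by
      show D s u (D s (-u) f) = f
      rw [D_comp s u hs (-u) f, add_neg_cancel, D_zero_param s hs f])
    (AlgHom.ext fun f => by
      show D s (-u) (D s u f) = f
      rw [D_comp s (-u) hs u f, neg_add_cancel, D_zero_param s hs f])

lemma substAlgEquiv_apply (hs : 1 ≤ s) (f : R2 K) :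
    (substAlgEquiv s u hs).toAlgHom.toRingHom f = D s u f := rfl

end CAux
end


noncomputable section

variable (K : Type) [Field K]

/-- For `t ≥ 4` and `char K ≠ 2`, `(x², y^t + x y²)` is contact equivalent to
`(x² + y^{2t-4}, x y²)` in `K[[x,y]]`. -/
theorem contact_equiv_H_type [IsAlgClosed K] (hchar : ringChar K ≠ 2)
    (t : ℕ) (ht : 4 ≤ t) :
    ContactEquiv K (X 0 ^ 2, X 1 ^ t + X 0 * X 1 ^ 2)
      (X 0 ^ 2 + X 1 ^ (2 * t - 4), X 0 * X 1 ^ 2) := by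
  have hs1 : 1 ≤ t - 2 := by omega
  refine ⟨CAux.substAlgEquiv (t - 2) (-1 : K) hs1, ?_⟩
  show Ideal.map (CAux.substAlgEquiv (t - 2) (-1 : K) hs1).toAlgHom.toRingHom
      (Ideal.span {X 0 ^ 2, X 1 ^ t + X 0 * X 1 ^ 2})
    = Ideal.span {X 0 ^ 2 + X 1 ^ (2 * t - 4), X 0 * X 1 ^ 2}
  set φ := (CAux.substAlgEquiv (t - 2) (-1 : K) hs1).toAlgHom.toRingHom with hφ
  have hX0 : φ (X 0) = X 0 - X 1 ^ (t - 2) := by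
    show CAux.D (t - 2) (-1 : K) (X 0) = _
    rw [CAux.D_X0 (t - 2) (-1 : K) hs1]
    rw [show ((C : K →+* R2 K)) (-1 : K) = -1 from by rw [map_neg, map_one]]
    ring
  have hX1 : φ (X 1) = X 1 := CAux.D_X1 (t - 2) (-1 : K) hs1
  have key2 : φ (X 1 ^ t + X 0 * X 1 ^ 2) = X 0 * X 1 ^ 2 := by
    rw [map_add, map_pow, map_mul, map_pow, hX0, hX1]
    have hx1t : (X 1 : R2 K) ^ t = X 1 ^ (t - 2) * X 1 ^ 2 := by
      rw [← pow_add]; congr 1; omega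
    rw [hx1t]; ring
  have key1 : φ (X 0 ^ 2) = (X 0 ^ 2 + X 1 ^ (2 * t - 4))
      + (X 0 * X 1 ^ 2) * (-(2 * X 1 ^ (t - 4))) := by
    rw [map_pow, hX0]
    have hA : (X 1 : R2 K) ^ (t - 2) = X 1 ^ (t - 4) * X 1 ^ 2 := by
      rw [← pow_add]; congr 1; omega
    have hB : (X 1 : R2 K) ^ (2 * t - 4)
        = X 1 ^ (t - 4) * X 1 ^ 2 * (X 1 ^ (t - 4) * X 1 ^ 2) := by
      rw [← pow_add, ← pow_add]; congr 1; omega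
    rw [hA, hB]; ring
  rw [Ideal.map_span, Set.image_insert_eq, Set.image_singleton, key1, key2]
  exact Ideal.span_pair_add_right_mul _ _ _

end
end

section
/- Let K be an algebraically closed field of characteristic ≠ 2, s = 3, and t ≥ q + 3 with q ≥ 1. Let e ∈ K[[y]] be a unit. Then (x² + y³, e·x·y^q + y^t) is contact equivalent to (x² + y³, x·y^q) in K[[x,y]]. -/
open MvPowerSeries

noncomputable section

variable (K : Type) [Field K]

/-- A power series involving only the variable `y`. -/
def OnlyY (u : R2 K) : Prop := ∀ β : Fin 2 →₀ ℕ, β 0 ≠ 0 → coeff β u = 0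

/-- For `s = 3`, `t ≥ q + 3`, `q ≥ 1`, `e` a unit of `K[[y]]` and `char K ≠ 2`,
`(x² + y³, e x y^q + y^t)` is contact equivalent to `(x² + y³, x y^q)`. -/
theorem contact_equiv_I_type [IsAlgClosed K] (hchar : ringChar K ≠ 2)
    (t q : ℕ) (hq : 1 ≤ q) (ht : q + 3 ≤ t)
    (e : R2 K) (he : OnlyY K e) (heu : IsUnit e) :
    ContactEquiv K (X 0 ^ 2 + X 1 ^ 3, e * X 0 * X 1 ^ q + X 1 ^ t)
      (X 0 ^ 2 + X 1 ^ 3, X 0 * X 1 ^ q) := by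
  refine ⟨AlgEquiv.refl, ?_⟩
  have hid : (AlgEquiv.refl : R2 K ≃ₐ[K] R2 K).toAlgHom.toRingHom = RingHom.id _ := rfl
  rw [hid, Ideal.map_id]
  obtain ⟨k, rfl⟩ : ∃ k, t = q + 3 + k := ⟨t - (q + 3), by omega⟩
  set f : R2 K := X 0 ^ 2 + X 1 ^ 3 with hf
  set g : R2 K := e * X 0 * X 1 ^ q + X 1 ^ (q + 3 + k) with hg
  set h : R2 K := X 0 * X 1 ^ q with hh
  set u : R2 K := e - X 0 * X 1 ^ k with hu_def
  have hu : IsUnit u := by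
    rw [MvPowerSeries.isUnit_iff_constantCoeff]
    have : constantCoeff u = constantCoeff e := by
      simp [hu_def, map_sub, map_mul, constantCoeff_X]
    rw [this]
    exact heu.map _
  obtain ⟨v, hv⟩ := hu
  have key : X 1 ^ (q + k) * f + u * h = g := by
    simp only [hf, hg, hh, hu_def]; ring
  apply le_antisymm
  · rw [Ideal.span_le]
    rintro z hz
    simp only [Set.mem_insert_iff, Set.mem_singleton_iff] at hz
    rcases hz with rfl | rfl
    · exact SetLike.mem_coe.mpr (Ideal.subset_span (Set.mem_insert _ _))
    · rw [SetLike.mem_coe, Ideal.mem_span_pair]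
      exact ⟨X 1 ^ (q + k), u, key⟩
  · rw [Ideal.span_le]
    rintro z hz
    simp only [Set.mem_insert_iff, Set.mem_singleton_iff] at hz
    rcases hz with rfl | rfl
    · exact SetLike.mem_coe.mpr (Ideal.subset_span (Set.mem_insert _ _))
    · rw [SetLike.mem_coe, Ideal.mem_span_pair]
      refine ⟨-((↑v⁻¹ : R2 K) * X 1 ^ (q + k)), (↑v⁻¹ : R2 K), ?_⟩
      have : u * h = g - X 1 ^ (q + k) * f := by rw [← key]; ring
      calc -((↑v⁻¹ : R2 K) * X 1 ^ (q + k)) * f + (↑v⁻¹ : R2 K) * g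
          = (↑v⁻¹ : R2 K) * (g - X 1 ^ (q + k) * f) := by ring
        _ = (↑v⁻¹ : R2 K) * (↑v * h) := by rw [← this, hv]
        _ = h := by rw [← mul_assoc, Units.inv_mul, one_mul]

end
end

section
/- Let K be an algebraically closed field of characteristic 2, and let a ∈ K, h₁ ∈ 𝔪³ ⊂ K[[x,y]], b, c ∈ K with c ≠ 0 and g₂ ∈ 𝔪² with 2-jet a x² + b x y + c y². If b = 0, then (x² + h₁, g₂) is contact equivalent to (x², y²); if b ≠ 0, then (x² + h₁, g₂) is contact equivalent to (x², x y + y²). -/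
open MvPowerSeries

noncomputable section

variable (K : Type) [Field K]

def ofFun (g : (Fin 2 →₀ ℕ) → K) : R2 K := g

variable {K}

@[simp] lemma coeff_ofFun (g : (Fin 2 →₀ ℕ) → K) (α : Fin 2 →₀ ℕ) :
    coeff α (ofFun K g) = g α := rfl

lemma fin2_ext {α β : Fin 2 →₀ ℕ} (h0 : α 0 = β 0) (h1 : α 1 = β 1) : α = β := by
  ext i; fin_cases i <;> assumption

lemma constCoeff_of_mem_m {f : R2 K} (hf : f ∈ mIdeal K) :
    constantCoeff f = 0 := by
  rw [mIdeal, Ideal.mem_span_pair] at hf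
  obtain ⟨u, v, rfl⟩ := hf
  simp

lemma split (k : ℕ) (hk : 1 ≤ k) (f : R2 K)
    (hf : ∀ α : Fin 2 →₀ ℕ, α 0 + α 1 < 2 * k - 1 → coeff α f = 0) :
    f = X 0 ^ k * ofFun K (fun α => coeff (α + Finsupp.single 0 k) f)
      + X 1 ^ k * ofFun K (fun α => if α 0 < k then coeff (α + Finsupp.single 1 k) f else 0) := by
  ext β
  classical
  rw [map_add, X_pow_eq, X_pow_eq, coeff_monomial_mul, coeff_monomial_mul]
  simp only [Finsupp.single_le_iff]
  have hs0 : (Finsupp.single 1 k : Fin 2 →₀ ℕ) 0 = 0 :=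
    Finsupp.single_eq_of_ne (by decide)
  by_cases h0 : k ≤ β 0
  · rw [if_pos h0, one_mul, coeff_ofFun, tsub_add_cancel_of_le (Finsupp.single_le_iff.mpr h0)]
    by_cases h1 : k ≤ β 1
    · rw [if_pos h1, one_mul, coeff_ofFun]
      have h2 : ((β - Finsupp.single 1 k : Fin 2 →₀ ℕ)) 0 = β 0 := by
        rw [Finsupp.tsub_apply, hs0, Nat.sub_zero]
      rw [h2, if_neg (by omega), add_zero]
    · rw [if_neg h1, add_zero]
  · rw [if_neg h0, zero_add]
    by_cases h1 : k ≤ β 1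
    · rw [if_pos h1, one_mul, coeff_ofFun]
      have h2 : ((β - Finsupp.single 1 k : Fin 2 →₀ ℕ)) 0 = β 0 := by
        rw [Finsupp.tsub_apply, hs0, Nat.sub_zero]
      rw [h2, if_pos (by omega), tsub_add_cancel_of_le (Finsupp.single_le_iff.mpr h1)]
    · rw [if_neg h1]
      exact hf β (by omega)

lemma mem_m_of_constCoeff {f : R2 K} (hf : constantCoeff f = 0) :
    f ∈ mIdeal K := by
  have h := split 1 le_rfl f ?_
  · rw [mIdeal, Ideal.mem_span_pair]
    refine ⟨ofFun K (fun α => coeff (α + Finsupp.single 0 1) f),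
      ofFun K (fun α => if α 0 < 1 then coeff (α + Finsupp.single 1 1) f else 0), ?_⟩
    conv_rhs => rw [h]
    ring
  · intro α hα
    have h0 : α 0 = 0 := by omega
    have h1 : α 1 = 0 := by omega
    have : α = 0 := fin2_ext (by simpa using h0) (by simpa using h1)
    rw [this]
    exact hf

lemma coeff_zero_of_mem_pow {n : ℕ} {f : R2 K} (hf : f ∈ (mIdeal K) ^ n) :
    ∀ α : Fin 2 →₀ ℕ, α 0 + α 1 < n → coeff α f = 0 := by
  induction n generalizing f with
  | zero => intro α hα; omega
  | succ n ih =>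
    rw [pow_succ] at hf
    refine Submodule.mul_induction_on hf ?_ ?_
    · intro p hp q hq α hα
      classical
      rw [coeff_mul]
      apply Finset.sum_eq_zero
      rintro ⟨β, γ⟩ hmem
      rw [Finset.HasAntidiagonal.mem_antidiagonal] at hmem
      have hβγ0 : β 0 + γ 0 = α 0 := by rw [← hmem]; simp
      have hβγ1 : β 1 + γ 1 = α 1 := by rw [← hmem]; simp
      by_cases hβ : β 0 + β 1 < n
      · rw [ih hp β hβ, zero_mul]
      · have hγ0 : γ 0 = 0 := by omega
        have hγ1 : γ 1 = 0 := by omega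
        have hγ : γ = 0 := fin2_ext (by simpa using hγ0) (by simpa using hγ1)
        have hz : coeff γ q = 0 := by
          rw [hγ, coeff_zero_eq_constantCoeff]
          exact constCoeff_of_mem_m hq
        rw [hz, mul_zero]
    · intro x y hx hy α hα
      rw [map_add, hx α hα, hy α hα, add_zero]

lemma decomp_sq {f : R2 K} (hf : ∀ α : Fin 2 →₀ ℕ, α 0 + α 1 < 3 → coeff α f = 0) :
    ∃ p q : R2 K, constantCoeff p = 0 ∧ constantCoeff q = 0 ∧
      f = p * X 0 ^ 2 + q * X 1 ^ 2 := by
  have h := split 2 (by norm_num) f (fun α hα => hf α (by omega))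
  refine ⟨ofFun K (fun α => coeff (α + Finsupp.single 0 2) f),
    ofFun K (fun α => if α 0 < 2 then coeff (α + Finsupp.single 1 2) f else 0), ?_, ?_, ?_⟩
  · rw [← coeff_zero_eq_constantCoeff, coeff_ofFun, zero_add]
    refine hf _ ?_
    rw [Finsupp.single_eq_same, Finsupp.single_eq_of_ne (by decide)]
    omega
  · rw [← coeff_zero_eq_constantCoeff, coeff_ofFun, if_pos (by simp), zero_add]
    refine hf _ ?_
    rw [Finsupp.single_eq_same, Finsupp.single_eq_of_ne (by decide)]
    omega
  · conv_lhs => rw [h]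
    ring

lemma decomp_w {μ : K} (hμ : μ ≠ 0) {f : R2 K}
    (hf : ∀ α : Fin 2 →₀ ℕ, α 0 + α 1 < 3 → coeff α f = 0) :
    ∃ p q : R2 K, constantCoeff p = 0 ∧ constantCoeff q = 0 ∧
      f = p * X 0 ^ 2 + q * (X 0 * X 1 + C μ * X 1 ^ 2) := by
  obtain ⟨p, q, hp, hq, hpq⟩ := decomp_sq hf
  have hqm := mem_m_of_constCoeff hq
  rw [mIdeal, Ideal.mem_span_pair] at hqm
  obtain ⟨r, s, hrs⟩ := hqm
  set μ' : R2 K := C μ⁻¹ with hμ'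
  have hμμ : C μ * μ' = 1 := by
    rw [hμ', ← map_mul, mul_inv_cancel₀ hμ, map_one]
  refine ⟨p + (μ' * μ' * s - μ' * r) * X 1, μ' * q - μ' * μ' * s * X 0, ?_, ?_, ?_⟩
  · simp [hp, hμ']
  · simp [hq, hμ']
  · rw [hpq]
    linear_combination (μ' * X 0 * X 1) * hrs -
      (q * X 1 ^ 2 - μ' * s * X 0 * X 1 ^ 2) * hμμ

lemma span_matrix {R : Type*} [CommRing R] (u w A B C' D f g : R)
    (hf : f = A * u + B * w) (hg : g = C' * u + D * w)
    (hdet : IsUnit (A * D - B * C')) :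
    Ideal.span {f, g} = Ideal.span {u, w} := by
  obtain ⟨E, hE⟩ := hdet.exists_left_inv
  have h1 : f ∈ Ideal.span {u, w} := Ideal.mem_span_pair.mpr ⟨A, B, hf.symm⟩
  have h2 : g ∈ Ideal.span {u, w} := Ideal.mem_span_pair.mpr ⟨C', D, hg.symm⟩
  have h3 : u ∈ Ideal.span {f, g} := Ideal.mem_span_pair.mpr ⟨E * D, -(E * B),
    by linear_combination (E * D) * hf - (E * B) * hg + u * hE⟩
  have h4 : w ∈ Ideal.span {f, g} := Ideal.mem_span_pair.mpr ⟨-(E * C'), E * A,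
    by linear_combination -(E * C') * hf + (E * A) * hg + w * hE⟩
  apply le_antisymm <;> rw [Ideal.span_le] <;> rintro z (rfl | rfl) <;> assumption

lemma span_pair_units {R : Type*} [CommRing R] (a b x y : R)
    (ha : IsUnit a) (hb : IsUnit b) :
    Ideal.span {a * x, b * y} = Ideal.span {x, y} := by
  obtain ⟨a', ha'⟩ := ha.exists_left_inv
  obtain ⟨b', hb'⟩ := hb.exists_left_inv
  have h1 : a * x ∈ Ideal.span {x, y} := Ideal.mem_span_pair.mpr ⟨a, 0, by ring⟩
  have h2 : b * y ∈ Ideal.span {x, y} := Ideal.mem_span_pair.mpr ⟨0, b, by ring⟩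
  have h3 : x ∈ Ideal.span {a * x, b * y} := Ideal.mem_span_pair.mpr ⟨a', 0,
    by linear_combination x * ha'⟩
  have h4 : y ∈ Ideal.span {a * x, b * y} := Ideal.mem_span_pair.mpr ⟨0, b',
    by linear_combination y * hb'⟩
  apply le_antisymm <;> rw [Ideal.span_le] <;> rintro z (rfl | rfl) <;> assumption

def rescale0 (s : Kˣ) : R2 K ≃ₐ[K] R2 K where
  toFun f := ofFun K (fun α => (s : K) ^ (α 0) * coeff α f)
  invFun f := ofFun K (fun α => ((s⁻¹ : Kˣ) : K) ^ (α 0) * coeff α f)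
  left_inv f := by
    ext β
    rw [coeff_ofFun, coeff_ofFun, ← mul_assoc, ← mul_pow, Units.inv_mul, one_pow, one_mul]
  right_inv f := by
    ext β
    rw [coeff_ofFun, coeff_ofFun, ← mul_assoc, ← mul_pow, Units.mul_inv, one_pow, one_mul]
  map_mul' f g := by
    classical
    ext β
    rw [coeff_ofFun, coeff_mul, coeff_mul, Finset.mul_sum]
    apply Finset.sum_congr rfl
    rintro ⟨γ, δ⟩ hmem
    rw [Finset.HasAntidiagonal.mem_antidiagonal] at hmem
    have h0 : γ 0 + δ 0 = β 0 := by rw [← hmem]; simp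
    rw [coeff_ofFun, coeff_ofFun, ← h0, pow_add]
    ring
  map_add' f g := by
    ext β
    rw [coeff_ofFun, map_add, map_add, coeff_ofFun, coeff_ofFun, mul_add]
  commutes' k := by
    classical
    ext β
    rw [coeff_ofFun, MvPowerSeries.algebraMap_apply, Algebra.algebraMap_self_apply, coeff_C]
    by_cases hβ : β = 0
    · rw [if_pos hβ, hβ]
      simp
    · rw [if_neg hβ, mul_zero]

@[simp] lemma coeff_rescale0 (s : Kˣ) (f : R2 K) (α : Fin 2 →₀ ℕ) :
    coeff α (rescale0 s f) = (s : K) ^ (α 0) * coeff α f := rfl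

lemma rescale0_X0 (s : Kˣ) :
    rescale0 s (X 0) = C (s : K) * X 0 := by
  classical
  ext β
  rw [coeff_rescale0, coeff_C_mul, coeff_X]
  by_cases hβ : β = Finsupp.single 0 1
  · rw [if_pos hβ, hβ]
    simp
  · rw [if_neg hβ, mul_zero, mul_zero]

lemma rescale0_X1 (s : Kˣ) : rescale0 s (X 1) = X 1 := by
  classical
  ext β
  rw [coeff_rescale0, coeff_X]
  by_cases hβ : β = Finsupp.single 1 1
  · rw [if_pos hβ, hβ, Finsupp.single_eq_of_ne (by decide), pow_zero, one_mul]
  · rw [if_neg hβ, mul_zero]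

lemma pair_apply0 (i j : ℕ) :
    (Finsupp.single 0 i + Finsupp.single 1 j : Fin 2 →₀ ℕ) 0 = i := by
  rw [Finsupp.add_apply, Finsupp.single_eq_same, Finsupp.single_eq_of_ne (by decide), add_zero]

lemma pair_apply1 (i j : ℕ) :
    (Finsupp.single 0 i + Finsupp.single 1 j : Fin 2 →₀ ℕ) 1 = j := by
  rw [Finsupp.add_apply, Finsupp.single_eq_same, Finsupp.single_eq_of_ne (by decide), zero_add]

lemma fin2_eq_iff {α β : Fin 2 →₀ ℕ} : α = β ↔ α 0 = β 0 ∧ α 1 = β 1 :=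
  ⟨fun h => by subst h; exact ⟨rfl, rfl⟩, fun h => fin2_ext h.1 h.2⟩

lemma pair_eq_pair {i j k l : ℕ} :
    (Finsupp.single 0 i + Finsupp.single 1 j : Fin 2 →₀ ℕ)
      = Finsupp.single 0 k + Finsupp.single 1 l ↔ (i = k ∧ j = l) := by
  constructor
  · intro h
    have h0 := DFunLike.congr_fun h 0
    have h1 := DFunLike.congr_fun h 1
    rw [pair_apply0, pair_apply0] at h0
    rw [pair_apply1, pair_apply1] at h1
    exact ⟨h0, h1⟩
  · rintro ⟨rfl, rfl⟩; rfl

lemma pair_eq_s0 {i j k : ℕ} :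
    (Finsupp.single 0 i + Finsupp.single 1 j : Fin 2 →₀ ℕ)
      = Finsupp.single 0 k ↔ (i = k ∧ j = 0) := by
  rw [show (Finsupp.single 0 k : Fin 2 →₀ ℕ)
      = Finsupp.single 0 k + Finsupp.single 1 0 by simp, pair_eq_pair]

lemma pair_eq_s1 {i j k : ℕ} :
    (Finsupp.single 0 i + Finsupp.single 1 j : Fin 2 →₀ ℕ)
      = Finsupp.single 1 k ↔ (i = 0 ∧ j = k) := by
  rw [show (Finsupp.single 1 k : Fin 2 →₀ ℕ)
      = Finsupp.single 0 0 + Finsupp.single 1 k by simp, pair_eq_pair]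

lemma coeff_X0X1 (α : Fin 2 →₀ ℕ) :
    coeff α ((X 0 : R2 K) * X 1)
      = if α = Finsupp.single 0 1 + Finsupp.single 1 1 then 1 else 0 := by
  classical
  have h : (X 0 : R2 K) * X 1
      = monomial (Finsupp.single 0 1 + Finsupp.single 1 1) 1 := by
    rw [X_def, X_def, monomial_mul_monomial, one_mul]
  rw [h, coeff_monomial]

lemma jet_flat (a b c : K) (g : R2 K)
    (hg : ∀ α : Fin 2 →₀ ℕ, α 0 + α 1 < 2 → coeff α g = 0)
    (ha : coeff (Finsupp.single 0 2) g = a)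
    (hb : coeff (Finsupp.single 0 1 + Finsupp.single 1 1) g = b)
    (hcc : coeff (Finsupp.single 1 2) g = c) :
    ∀ α : Fin 2 →₀ ℕ, α 0 + α 1 < 3 →
      coeff α (g - (C a * X 0 ^ 2 + C b * (X 0 * X 1)
        + C c * X 1 ^ 2)) = 0 := by
  classical
  have hglow : ∀ i j : ℕ, i + j < 2 →
      coeff (Finsupp.single 0 i + Finsupp.single 1 j) g = 0 := fun i j h =>
    hg _ (by rw [pair_apply0, pair_apply1]; omega)
  have ha' : coeff (Finsupp.single 0 2 + Finsupp.single 1 0) g = a := by simpa using ha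
  have hc' : coeff (Finsupp.single 0 0 + Finsupp.single 1 2) g = c := by simpa using hcc
  have hg0 : constantCoeff g = 0 := by
    rw [← coeff_zero_eq_constantCoeff]; exact hg 0 (by simp)
  intro α hα
  obtain ⟨i, j, rfl⟩ : ∃ i j : ℕ, α = Finsupp.single 0 i + Finsupp.single 1 j :=
    ⟨α 0, α 1, fin2_ext (pair_apply0 _ _).symm (pair_apply1 _ _).symm⟩
  rw [pair_apply0, pair_apply1] at hα
  rw [map_sub, map_add, map_add, coeff_C_mul, coeff_C_mul, coeff_C_mul,
    coeff_X_pow, coeff_X_pow, coeff_X0X1]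
  have hi2 : i ≤ 2 := by omega
  have hj2 : j ≤ 2 := by omega
  interval_cases i <;> interval_cases j <;>
    first
    | (exfalso; omega)
    | (norm_num [fin2_eq_iff, Finsupp.add_apply, Finsupp.single_apply, hglow, hg, hg0, ha, ha', hb, hcc, hc'])

theorem char_two_degenerate_normal_form' [CharP K 2]
    (a b c : K) (hc : c ≠ 0) (h₁ g₂ : R2 K)
    (hh₁ : h₁ ∈ (mIdeal K) ^ 3) (hg₂ : g₂ ∈ (mIdeal K) ^ 2)
    (ha : coeff (Finsupp.single 0 2) g₂ = a)
    (hb : coeff (Finsupp.single 0 1 + Finsupp.single 1 1) g₂ = b)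
    (hcc : coeff (Finsupp.single 1 2) g₂ = c) :
    (b = 0 → ∃ φ : R2 K ≃ₐ[K] R2 K,
      Ideal.map φ.toAlgHom.toRingHom (Ideal.span {X 0 ^ 2 + h₁, g₂})
        = Ideal.span {(X 0 : R2 K) ^ 2, X 1 ^ 2}) ∧
    (b ≠ 0 → ∃ φ : R2 K ≃ₐ[K] R2 K,
      Ideal.map φ.toAlgHom.toRingHom (Ideal.span {X 0 ^ 2 + h₁, g₂})
        = Ideal.span {(X 0 : R2 K) ^ 2, X 0 * X 1 + X 1 ^ 2}) := by
  have hflat1 : ∀ α : Fin 2 →₀ ℕ, α 0 + α 1 < 3 → coeff α h₁ = 0 :=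
    coeff_zero_of_mem_pow hh₁
  have hflat2 : ∀ α : Fin 2 →₀ ℕ, α 0 + α 1 < 2 → coeff α g₂ = 0 :=
    coeff_zero_of_mem_pow hg₂
  have hjet := jet_flat a b c g₂ hflat2 ha hb hcc
  constructor
  · intro hb0
    subst hb0
    obtain ⟨p₁, q₁, hp₁, hq₁, hd₁⟩ := decomp_sq hflat1
    obtain ⟨p₂, q₂, hp₂, hq₂, hd₂⟩ := decomp_sq hjet
    have hg2eq : g₂ = (C a + p₂) * X 0 ^ 2 + (C c + q₂) * X 1 ^ 2 := by
      rw [map_zero] at hd₂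
      linear_combination hd₂
    have hf1eq : X 0 ^ 2 + h₁ = (1 + p₁) * X 0 ^ 2 + q₁ * X 1 ^ 2 := by
      linear_combination hd₁
    have hdet : IsUnit ((1 + p₁) * (C c + q₂) - q₁ * (C a + p₂)) := by
      rw [isUnit_iff_constantCoeff]
      have hval : (constantCoeff)
          ((1 + p₁) * (C c + q₂) - q₁ * (C a + p₂)) = c := by
        simp [hp₁, hq₁, hp₂, hq₂]
      rw [hval]
      exact hc.isUnit
    have hspan := span_matrix ((X 0 : R2 K) ^ 2) ((X 1 : R2 K) ^ 2) _ _ _ _ _ _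
      hf1eq hg2eq hdet
    refine ⟨AlgEquiv.refl, ?_⟩
    have hid : (AlgEquiv.refl : R2 K ≃ₐ[K] R2 K).toAlgHom.toRingHom = RingHom.id (R2 K) := rfl
    rw [hid, Ideal.map_id]
    exact hspan
  · intro hbne
    have hμ : b⁻¹ * c ≠ 0 := mul_ne_zero (inv_ne_zero hbne) hc
    obtain ⟨p₁, q₁, hp₁, hq₁, hd₁⟩ := decomp_w hμ hflat1
    obtain ⟨p₂, q₂, hp₂, hq₂, hd₂⟩ := decomp_w hμ hjet
    have hbμ : (C b : R2 K) * C (b⁻¹ * c) = C c := by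
      rw [← map_mul]
      congr 1
      field_simp
    have hg2eq : g₂ = (C a + p₂) * X 0 ^ 2
        + (C b + q₂) * (X 0 * X 1 + C (b⁻¹ * c) * X 1 ^ 2) := by
      linear_combination hd₂ - X 1 ^ 2 * hbμ
    have hf1eq : X 0 ^ 2 + h₁ = (1 + p₁) * X 0 ^ 2
        + q₁ * (X 0 * X 1 + C (b⁻¹ * c) * X 1 ^ 2) := by
      linear_combination hd₁
    have hdet : IsUnit ((1 + p₁) * (C b + q₂) - q₁ * (C a + p₂)) := by
      rw [isUnit_iff_constantCoeff]
      have hval : (constantCoeff)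
          ((1 + p₁) * (C b + q₂) - q₁ * (C a + p₂)) = b := by
        simp [hp₁, hq₁, hp₂, hq₂]
      rw [hval]
      exact hbne.isUnit
    have hspan := span_matrix ((X 0 : R2 K) ^ 2)
      ((X 0 : R2 K) * X 1 + C (b⁻¹ * c) * X 1 ^ 2) _ _ _ _ _ _
      hf1eq hg2eq hdet
    set u : Kˣ := Units.mk0 (b⁻¹ * c) hμ with hu
    refine ⟨rescale0 u, ?_⟩
    rw [hspan, Ideal.map_span, Set.image_pair]
    have hCμ : rescale0 (K := K) u (C (b⁻¹ * c)) = C (b⁻¹ * c) := by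
      have h := (rescale0 (K := K) u).commutes (b⁻¹ * c)
      rwa [MvPowerSeries.algebraMap_apply, Algebra.algebraMap_self_apply] at h
    have e1 : (rescale0 (K := K) u).toAlgHom.toRingHom (X 0 ^ 2)
        = C ((b⁻¹ * c) ^ 2) * X 0 ^ 2 := by
      show rescale0 (K := K) u (X 0 ^ 2) = _
      rw [map_pow, rescale0_X0, mul_pow, ← map_pow]
      rfl
    have e2 : (rescale0 (K := K) u).toAlgHom.toRingHom
          (X 0 * X 1 + C (b⁻¹ * c) * X 1 ^ 2)
        = C (b⁻¹ * c) * (X 0 * X 1 + X 1 ^ 2) := by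
      show rescale0 (K := K) u (X 0 * X 1 + C (b⁻¹ * c) * X 1 ^ 2) = _
      rw [map_add, map_mul, map_mul, map_pow, rescale0_X0, rescale0_X1, hCμ]
      have : (Units.mk0 (b⁻¹ * c) hμ : K) = b⁻¹ * c := rfl
      rw [hu, this]
      ring
    rw [e1, e2]
    refine span_pair_units _ _ _ _ ?_ ?_
    · rw [isUnit_iff_constantCoeff, constantCoeff_C]
      exact (pow_ne_zero 2 hμ).isUnit
    · rw [isUnit_iff_constantCoeff, constantCoeff_C]
      exact hμ.isUnit

variable (K)

/-- Characteristic 2 normal forms: let `h₁ ∈ 𝔪³`, `g₂ ∈ 𝔪²` with 2-jet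
`a x² + b x y + c y²`, `c ≠ 0`, and assume `(x² + h₁, g₂)` is an ICIS. If `b = 0` the
pair is contact equivalent to `(x², y²)`; if `b ≠ 0` it is contact equivalent to
`(x², x y + y²)`. -/
theorem char_two_degenerate_normal_form [IsAlgClosed K] [CharP K 2]
    (a b c : K) (hc : c ≠ 0) (h₁ g₂ : R2 K)
    (hh₁ : h₁ ∈ (mIdeal K) ^ 3) (hg₂ : g₂ ∈ (mIdeal K) ^ 2)
    (ha : coeff (Finsupp.single 0 2) g₂ = a)
    (hb : coeff (Finsupp.single 0 1 + Finsupp.single 1 1) g₂ = b)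
    (hcc : coeff (Finsupp.single 1 2) g₂ = c)
    (hICIS : IsICIS K (X 0 ^ 2 + h₁) g₂) :
    (b = 0 → ContactEquiv K (X 0 ^ 2 + h₁, g₂) (X 0 ^ 2, X 1 ^ 2)) ∧
    (b ≠ 0 → ContactEquiv K (X 0 ^ 2 + h₁, g₂) (X 0 ^ 2, X 0 * X 1 + X 1 ^ 2)) := by
  obtain ⟨h1, h2⟩ := char_two_degenerate_normal_form' a b c hc h₁ g₂ hh₁ hg₂ ha hb hcc
  exact ⟨h1, h2⟩

end
end
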